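/- Let α ≥ 1 and s ≥ 1 be integers, γ : Finset (Fin s) → ℝ a family of weights, and define η_α(y, y') = ((2π)^{2α} / ((-1)^{α+1} · (2α)!)) · B_{2α}({y − y'}) and K(y, y') = Σ_{u ⊆ {1,…,s}} γ_u · Π_{j ∈ u} η_α(y_j, y'_j). Let n ≥ 1 be an integer and z ∈ ℤ^s a generating vector, and for k ∈ ℤ define the lattice point t_k ∈ [0,1)^s by (t_k)_j = {k · z_j / n}. Then for all integers k, k', K(t_k, t_{k'}) = K(t_{k−k'}, 0), where 0 denotes the zero vector in Fin s → ℝ; that is, the kernel matrix (K(t_k, t_{k'}))_{k,k'=1}^n is circulant. -/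
import Mathlib


open Real

/-- The univariate kernel `η_α(y,y') = ((2π)^{2α} / ((-1)^{α+1} (2α)!)) · B_{2α}({y-y'})`. -/
noncomputable def eta (α : ℕ) (y y' : ℝ) : ℝ :=
  ((2 * π) ^ (2 * α) / ((-1 : ℝ) ^ (α + 1) * (Nat.factorial (2 * α)))) *
    Polynomial.aeval (Int.fract (y - y')) (Polynomial.bernoulli (2 * α))

/-- The kernel `K(y,y') = Σ_{u ⊆ {1:s}} γ_u Π_{j ∈ u} η_α(y_j, y'_j)`. -/
noncomputable def Ker (α s : ℕ) (γ : Finset (Fin s) → ℝ) (y y' : Fin s → ℝ) : ℝ :=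
  ∑ u : Finset (Fin s), γ u * ∏ j ∈ u, eta α (y j) (y' j)

/-- Rank-1 lattice point `t_k = {k z / n}` (componentwise fractional part). -/
noncomputable def latticePoint (s : ℕ) (n : ℕ) (z : Fin s → ℤ) (k : ℤ) : Fin s → ℝ :=
  fun j => Int.fract (((k * z j : ℤ) : ℝ) / (n : ℝ))

lemma fract_key (a b : ℝ) : Int.fract (Int.fract a - Int.fract b) = Int.fract (a - b) := by
  have h : Int.fract a - Int.fract b = a - b - ((⌊a⌋ - ⌊b⌋ : ℤ) : ℝ) := by
    unfold Int.fract; push_cast; ring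
  rw [h, Int.fract_sub_intCast]

/-- The kernel matrix over a rank-1 lattice is circulant:
`K(t_k, t_{k'}) = K(t_{k-k'}, 0)`. -/
theorem Ker_lattice_circulant (α s : ℕ) (hα : 1 ≤ α) (hs : 1 ≤ s)
    (γ : Finset (Fin s) → ℝ) (n : ℕ) (hn : 1 ≤ n) (z : Fin s → ℤ) (k k' : ℤ) :
    Ker α s γ (latticePoint s n z k) (latticePoint s n z k')
      = Ker α s γ (latticePoint s n z (k - k')) 0 := by
  unfold Ker
  refine Finset.sum_congr rfl fun u _ => ?_
  congr 1
  refine Finset.prod_congr rfl fun j _ => ?_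
  unfold eta latticePoint
  congr 2
  rw [fract_key, Pi.zero_apply, sub_zero, Int.fract_fract]
  congr 1
  push_cast
  ring
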